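/- arXiv:2110.03673 — 3 statements merged into one kernel-verified Lean document; each statement's English description precedes it below -/
import Mathlib

section
/- Let d ≥ 1, n ≥ 1, let ω_1, …, ω_n be unit vectors in ℝ^d, a_1, …, a_n, b_1, …, b_n ∈ ℝ, and define f : ℝ^d → ℝ by f(x) = (1/n) Σ_{i=1}^n a_i (⟨ω_i, x⟩ − b_i)_+. Suppose f is not an affine function, i.e. there are no w ∈ ℝ^d and c ∈ ℝ with f(x) = ⟨w, x⟩ + c for all x. Then there is no complex finite Borel measure ν on ℝ^d with ∫_{ℝ^d} ‖ξ‖₂² d|ν|(ξ) < ∞ such that f(x) = (2π)^{−d/2} ∫_{ℝ^d} e^{i⟨ξ, x⟩} dν(ξ) for all x ∈ ℝ^d. In other words, a non-affine finite-width two-layer ReLU network admits no Fourier representation with finite quantity C_f := (2π)^{−d/2} ∫ ‖ξ‖₂² d|ν|(ξ). -/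
open MeasureTheory Filter Topology
open scoped RealInnerProductSpace

/-!
If `f = ∫ e^{i⟨ξ, ·⟩} dν` with `∫ ‖ξ‖² d|ν| < ∞`, then `|f (x + v) + f (x - v) - 2 f x| ≤ C ‖v‖²`,
since `|e^{i(p+q)} + e^{i(p-q)} - 2 e^{ip}| = 2 - 2 cos q ≤ q²`. For a ReLU network the second
difference with step `t v` equals, for small `t > 0`, `t` times the total jump of the slope of
`s ↦ f (x + s v)` at `s = 0`; so all slope jumps vanish. Grouping the neurons by where their kinks
meet a line expresses every second difference through slope jumps, so all second differences
vanish, and a continuous function with vanishing second differences is affine.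
-/

def secondDiff {E F : Type*} [AddCommGroup E] [AddCommGroup F] (f : E → F) (x v : E) : F :=
  f (x + v) + f (x - v) - 2 • f x

lemma secondDiff_relu (s u : ℝ) : secondDiff (fun t : ℝ => max t 0) s u = max (|u| - |s|) 0 := by
  simp only [secondDiff, nsmul_eq_mul, Nat.cast_ofNat]
  rcases le_total 0 u with hu | hu <;> rcases le_total 0 s with hs | hs <;>
    simp only [abs_of_nonneg, abs_of_nonpos, hu, hs, max_def] <;> split_ifs <;> linarith

lemma max_abs_sub_abs_eq_abs_mul (s u : ℝ) : max (|u| - |s|) 0 = |u| * max (1 - |s / u|) 0 := by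
  rcases eq_or_ne u 0 with rfl | hu
  · simp
  · rw [mul_max_of_nonneg _ _ (abs_nonneg u), mul_zero, mul_sub, mul_one, ← abs_mul,
      mul_div_cancel₀ _ hu]

lemma norm_secondDiff_exp_mul_I_le (p q : ℝ) :
    ‖secondDiff (fun t : ℝ => Complex.exp (Complex.I * t)) p q‖ ≤ q ^ 2 := by
  have hfactor : secondDiff (fun t : ℝ => Complex.exp (Complex.I * t)) p q =
      Complex.exp (Complex.I * p) * ((2 * Real.cos q - 2 : ℝ) : ℂ) := by
    simp only [secondDiff, nsmul_eq_mul, Complex.ofReal_add, Complex.ofReal_sub, mul_add, mul_sub,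
      Complex.exp_add, Complex.exp_sub, Complex.ofReal_cos, Complex.cos, Complex.ofReal_mul,
      Complex.ofReal_ofNat]
    rw [neg_mul, mul_comm (q : ℂ), Complex.exp_neg]
    field_simp
    ring
  rw [hfactor, norm_mul, Complex.norm_exp_I_mul_ofReal, one_mul, Complex.norm_real,
    Real.norm_eq_abs, abs_of_nonpos (by linarith [Real.cos_le_one q])]
  linarith [Real.one_sub_sq_div_two_le_cos (x := q)]

section Fourier

variable {E : Type*} [NormedAddCommGroup E] [InnerProductSpace ℝ E] [MeasurableSpace E]
  [OpensMeasurableSpace E] {μ : Measure E} [IsFiniteMeasure μ] {h : E → ℂ}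

lemma integrable_exp_inner_mul (hm : AEStronglyMeasurable h μ) (hh : ∀ ξ, ‖h ξ‖ ≤ 1) (y : E) :
    Integrable (fun ξ => Complex.exp (Complex.I * (⟪ξ, y⟫ : ℂ)) * h ξ) μ := by
  have hexp : Continuous fun ξ : E => Complex.exp (Complex.I * (⟪ξ, y⟫ : ℂ)) := by fun_prop
  refine (integrable_const (1 : ℝ)).mono' (hexp.aestronglyMeasurable.mul hm) ?_
  filter_upwards with ξ
  simpa [norm_mul, Complex.norm_exp_I_mul_ofReal] using hh ξ

lemma secondDiff_integral_exp_inner_mul (hm : AEStronglyMeasurable h μ) (hh : ∀ ξ, ‖h ξ‖ ≤ 1)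
    (x v : E) :
    secondDiff (fun y => ∫ ξ, Complex.exp (Complex.I * (⟪ξ, y⟫ : ℂ)) * h ξ ∂μ) x v =
      ∫ ξ, secondDiff (fun t : ℝ => Complex.exp (Complex.I * t)) ⟪ξ, x⟫ ⟪ξ, v⟫ * h ξ ∂μ := by
  have hi := integrable_exp_inner_mul hm hh
  simp only [secondDiff, nsmul_eq_mul, Nat.cast_ofNat]
  rw [← integral_const_mul, ← integral_add (hi _) (hi _),
    ← integral_sub ((hi (x + v)).fun_add (hi (x - v))) ((hi x).const_mul 2)]
  congr 1 with ξ
  simp only [inner_add_right, inner_sub_right]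
  ring

lemma norm_secondDiff_integral_exp_inner_mul_le (hm : AEStronglyMeasurable h μ)
    (hh : ∀ ξ, ‖h ξ‖ ≤ 1) (h2 : Integrable (fun ξ => ‖ξ‖ ^ 2) μ) (x v : E) :
    ‖secondDiff (fun y => ∫ ξ, Complex.exp (Complex.I * (⟪ξ, y⟫ : ℂ)) * h ξ ∂μ) x v‖ ≤
      ‖v‖ ^ 2 * ∫ ξ, ‖ξ‖ ^ 2 ∂μ := by
  rw [secondDiff_integral_exp_inner_mul hm hh, ← integral_const_mul]
  refine norm_integral_le_of_norm_le (h2.const_mul _) (Eventually.of_forall fun ξ => ?_)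
  calc ‖secondDiff (fun t : ℝ => Complex.exp (Complex.I * t)) ⟪ξ, x⟫ ⟪ξ, v⟫ * h ξ‖
      ≤ ⟪ξ, v⟫ ^ 2 * 1 := by
        rw [norm_mul]
        exact mul_le_mul (norm_secondDiff_exp_mul_I_le _ _) (hh ξ) (norm_nonneg _) (sq_nonneg _)
    _ ≤ ‖v‖ ^ 2 * ‖ξ‖ ^ 2 := by
        rw [mul_one, ← sq_abs, ← mul_pow, mul_comm]
        exact pow_le_pow_left₀ (abs_nonneg _) (abs_real_inner_le_norm ξ v) 2

lemma abs_secondDiff_le_of_eq_smul_integral {f : E → ℝ} {c : ℝ} (hc : 0 ≤ c)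
    (hm : AEStronglyMeasurable h μ) (hh : ∀ ξ, ‖h ξ‖ ≤ 1)
    (h2 : Integrable (fun ξ => ‖ξ‖ ^ 2) μ)
    (hrep : ∀ x, (f x : ℂ) = c • ∫ ξ, Complex.exp (Complex.I * (⟪ξ, x⟫ : ℂ)) * h ξ ∂μ)
    (x v : E) : |secondDiff f x v| ≤ c * (‖v‖ ^ 2 * ∫ ξ, ‖ξ‖ ^ 2 ∂μ) := by
  have hcast : ((secondDiff f x v : ℝ) : ℂ) =
      c • secondDiff (fun y => ∫ ξ, Complex.exp (Complex.I * (⟪ξ, y⟫ : ℂ)) * h ξ ∂μ) x v := by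
    simp only [secondDiff, Complex.ofReal_sub, Complex.ofReal_add, nsmul_eq_mul,
      Complex.ofReal_mul, Complex.ofReal_ofNat, Nat.cast_ofNat, hrep, smul_sub, smul_add,
      mul_smul_comm]
  rw [← Real.norm_eq_abs, ← Complex.norm_real, hcast, norm_smul, Real.norm_of_nonneg hc]
  exact mul_le_mul_of_nonneg_left (norm_secondDiff_integral_exp_inner_mul_le hm hh h2 x v) hc

end Fourier

section ReLU

variable {E ι : Type*} [NormedAddCommGroup E] [InnerProductSpace ℝ E] [Fintype ι]
  (a b : ι → ℝ) (ω : ι → E)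

def reluNet (x : E) : ℝ := ∑ i, a i * max (⟪ω i, x⟫ - b i) 0

/-- The jump of the derivative of `t ↦ reluNet a b ω (x + t • v)` at `t = 0`. -/
noncomputable def slopeJump (x v : E) : ℝ := ∑ i, if ⟪ω i, x⟫ = b i then a i * |⟪ω i, v⟫| else 0

lemma continuous_reluNet : Continuous (reluNet a b ω) := by
  unfold reluNet; fun_prop

lemma secondDiff_reluNet (x v : E) :
    secondDiff (reluNet a b ω) x v = ∑ i, a i * max (|⟪ω i, v⟫| - |⟪ω i, x⟫ - b i|) 0 := by
  simp only [secondDiff, reluNet, ← Finset.sum_add_distrib, Finset.smul_sum,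
    ← Finset.sum_sub_distrib]
  refine Finset.sum_congr rfl fun i _ => ?_
  rw [← secondDiff_relu]
  simp only [secondDiff, inner_add_right, inner_sub_right, nsmul_eq_mul]
  ring_nf

variable {a b ω}

lemma secondDiff_reluNet_smul_eventually_eq (x v : E) :
    ∀ᶠ t in 𝓝[>] 0, secondDiff (reluNet a b ω) x (t • v) = t * slopeJump a b ω x v := by
  have hterm : ∀ i, ∀ᶠ t in 𝓝[>] (0 : ℝ),
      a i * max (|⟪ω i, t • v⟫| - |⟪ω i, x⟫ - b i|) 0 =
        t * if ⟪ω i, x⟫ = b i then a i * |⟪ω i, v⟫| else 0 := by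
    intro i
    have hsmall : Tendsto (fun t : ℝ => t * |⟪ω i, v⟫|) (𝓝[>] 0) (𝓝 0) :=
      ((continuous_mul_const _).tendsto' 0 0 (zero_mul _)).mono_left nhdsWithin_le_nhds
    split_ifs with hx
    · filter_upwards [self_mem_nhdsWithin] with t (ht : 0 < t)
      rw [hx, sub_self, abs_zero, sub_zero, real_inner_smul_right, abs_mul, abs_of_pos ht,
        max_eq_left (by positivity)]
      ring
    · filter_upwards [hsmall.eventually_lt_const (abs_pos.2 (sub_ne_zero.2 hx)),
        self_mem_nhdsWithin] with t ht (ht0 : 0 < t)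
      rw [real_inner_smul_right, abs_mul, abs_of_pos ht0, max_eq_right (by linarith), mul_zero,
        mul_zero]
  filter_upwards [eventually_all.2 hterm] with t ht
  rw [secondDiff_reluNet, slopeJump, Finset.mul_sum]
  exact Finset.sum_congr rfl fun i _ => ht i

lemma slopeJump_eq_zero_of_abs_secondDiff_le {x v : E} {C : ℝ}
    (hC : ∀ t, |secondDiff (reluNet a b ω) x (t • v)| ≤ C * t ^ 2) : slopeJump a b ω x v = 0 := by
  have hle : ∀ᶠ t in 𝓝[>] (0 : ℝ), |slopeJump a b ω x v| ≤ C * t := by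
    filter_upwards [secondDiff_reluNet_smul_eventually_eq (a := a) (b := b) (ω := ω) x v,
      self_mem_nhdsWithin] with t ht (ht0 : 0 < t)
    have := hC t
    rw [ht, abs_mul, abs_of_pos ht0, sq, ← mul_assoc, mul_comm C t, mul_assoc] at this
    exact le_of_mul_le_mul_left this ht0
  have hlim : Tendsto (fun t : ℝ => C * t) (𝓝[>] 0) (𝓝 0) :=
    ((continuous_const_mul C).tendsto' 0 0 (mul_zero C)).mono_left nhdsWithin_le_nhds
  exact abs_nonpos_iff.1 (ge_of_tendsto hlim hle)

lemma sum_filter_div_eq_slopeJump (p v : E) (τ : ℝ) :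
    ∑ i with (⟪ω i, p⟫ - b i) / ⟪ω i, v⟫ = τ, a i * |⟪ω i, v⟫| =
      slopeJump a b ω (p - τ • v) v := by
  rw [Finset.sum_filter, slopeJump]
  refine Finset.sum_congr rfl fun i _ => ?_
  rcases eq_or_ne ⟪ω i, v⟫ 0 with hu | hu
  · simp [hu]
  · refine if_congr ?_ rfl rfl
    rw [inner_sub_right, real_inner_smul_right, div_eq_iff hu]
    constructor <;> intro h <;> linarith

/-- Grouping the neurons by the parameter `τ` at which their kink meets the line `p + τ v`
writes the second difference as `∑ τ, slopeJump (p - τ • v) v * (1 - |τ|)₊`. -/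
lemma secondDiff_reluNet_eq_zero {v : E} (h : ∀ x, slopeJump a b ω x v = 0) (p : E) :
    secondDiff (reluNet a b ω) p v = 0 := by
  set τ : ι → ℝ := fun i => (⟪ω i, p⟫ - b i) / ⟪ω i, v⟫
  rw [secondDiff_reluNet, ← Finset.sum_fiberwise_of_maps_to
    (fun i _ => Finset.mem_image_of_mem τ (Finset.mem_univ i))]
  refine Finset.sum_eq_zero fun t _ => ?_
  calc ∑ i with τ i = t, a i * max (|⟪ω i, v⟫| - |⟪ω i, p⟫ - b i|) 0
      = ∑ i with τ i = t, a i * |⟪ω i, v⟫| * max (1 - |t|) 0 := by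
        refine Finset.sum_congr rfl fun i hi => ?_
        rw [max_abs_sub_abs_eq_abs_mul, ← (Finset.mem_filter.1 hi).2, mul_assoc]
    _ = 0 := by rw [← Finset.sum_mul, sum_filter_div_eq_slopeJump, h, zero_mul]

end ReLU

lemma exists_inner_add_const_of_secondDiff_eq_zero {E : Type*} [NormedAddCommGroup E]
    [InnerProductSpace ℝ E] [CompleteSpace E] {f : E → ℝ} (hf : Continuous f)
    (h : ∀ x v, secondDiff f x v = 0) : ∃ (w : E) (c : ℝ), ∀ x, f x = ⟪w, x⟫ + c := by
  have hmid : ∀ x y, f (midpoint ℝ x y) = midpoint ℝ (f x) (f y) := by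
    intro x y
    have := h (midpoint ℝ x y) (x - midpoint ℝ x y)
    have hy : midpoint ℝ x y - (x - midpoint ℝ x y) = y := by
      rw [midpoint_eq_smul_add, invOf_eq_inv]; module
    simp only [secondDiff, add_sub_cancel, hy, nsmul_eq_mul, Nat.cast_ofNat] at this
    rw [midpoint_eq_smul_add ℝ (f x), invOf_eq_inv, smul_eq_mul]
    linarith
  set F := AffineMap.ofMapMidpoint f hmid hf
  have hF : ∀ x, f x = F.linear x + f 0 := fun x => by
    have := F.linearMap_vsub x 0
    rw [vsub_eq_sub, sub_zero] at this
    rw [this, vsub_eq_sub]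
    exact (sub_add_cancel (f x) (f 0)).symm
  let L : E →L[ℝ] ℝ := ⟨F.linear, AffineMap.continuous_linear_iff.2 hf⟩
  refine ⟨(InnerProductSpace.toDual ℝ E).symm L, f 0, fun x => ?_⟩
  rw [InnerProductSpace.toDual_symm_apply, hF]
  rfl

theorem stmt6_general (d n : ℕ)
    (ω : Fin n → EuclideanSpace ℝ (Fin d))
    (a b : Fin n → ℝ) (f : EuclideanSpace ℝ (Fin d) → ℝ)
    (hf : ∀ x, f x = (1 / n : ℝ) * ∑ i, a i * max (⟪ω i, x⟫ - b i) 0)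
    (hnotaff : ¬ ∃ (w : EuclideanSpace ℝ (Fin d)) (c : ℝ), ∀ x, f x = ⟪w, x⟫ + c) :
    ¬ ∃ (μ : Measure (EuclideanSpace ℝ (Fin d))) (h : EuclideanSpace ℝ (Fin d) → ℂ),
        IsFiniteMeasure μ ∧ Measurable h ∧ (∀ ξ, ‖h ξ‖ = 1) ∧
        Integrable (fun ξ => ‖ξ‖ ^ 2) μ ∧
        ∀ x, (f x : ℂ) = ((2 * Real.pi) ^ ((d : ℝ) / 2))⁻¹ •
          ∫ ξ, Complex.exp (Complex.I * (⟪ξ, x⟫ : ℂ)) * h ξ ∂μ := by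
  rintro ⟨μ, h, hμ, hmeas, hnorm, hint, hrep⟩
  have hnet : f = reluNet (fun i => a i / n) b ω := funext fun x => by
    rw [hf, reluNet, Finset.mul_sum]
    exact Finset.sum_congr rfl fun i _ => by ring
  have hbound := abs_secondDiff_le_of_eq_smul_integral (by positivity)
    hmeas.aestronglyMeasurable (fun ξ => (hnorm ξ).le) hint hrep
  rw [hnet] at hbound hnotaff
  refine hnotaff (exists_inner_add_const_of_secondDiff_eq_zero (continuous_reluNet _ _ _)
    fun x v => secondDiff_reluNet_eq_zero (fun y => ?_) x)
  refine slopeJump_eq_zero_of_abs_secondDiff_le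
    (C := ((2 * Real.pi) ^ ((d : ℝ) / 2))⁻¹ * (‖v‖ ^ 2 * ∫ ξ, ‖ξ‖ ^ 2 ∂μ)) fun t => ?_
  refine (hbound y (t • v)).trans_eq ?_
  rw [norm_smul, mul_pow, Real.norm_eq_abs, sq_abs]
  ring

/-- A non-affine finite-width two-layer ReLU network admits no Fourier representation by a
complex finite Borel measure `ν` with `∫ ‖ξ‖² d|ν|(ξ) < ∞`.  The complex measure is encoded
in polar form `dν = h dμ` with `μ = |ν|` a finite positive measure and `h` a measurable
density of modulus one. -/
theorem stmt6 (d n : ℕ) (hd : 1 ≤ d) (hn : 1 ≤ n)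
    (ω : Fin n → EuclideanSpace ℝ (Fin d)) (hω : ∀ i, ‖ω i‖ = 1)
    (a b : Fin n → ℝ) (f : EuclideanSpace ℝ (Fin d) → ℝ)
    (hf : ∀ x, f x = (1 / n : ℝ) * ∑ i, a i * max (⟪ω i, x⟫ - b i) 0)
    (hnotaff : ¬ ∃ (w : EuclideanSpace ℝ (Fin d)) (c : ℝ), ∀ x, f x = ⟪w, x⟫ + c) :
    ¬ ∃ (μ : Measure (EuclideanSpace ℝ (Fin d))) (h : EuclideanSpace ℝ (Fin d) → ℂ),
        IsFiniteMeasure μ ∧ Measurable h ∧ (∀ ξ, ‖h ξ‖ = 1) ∧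
        Integrable (fun ξ => ‖ξ‖ ^ 2) μ ∧
        ∀ x, (f x : ℂ) = ((2 * Real.pi) ^ ((d : ℝ) / 2))⁻¹ •
          ∫ ξ, Complex.exp (Complex.I * (⟪ξ, x⟫ : ℂ)) * h ξ ∂μ :=
  stmt6_general d n ω a b f hf hnotaff
end

section
/- Let S¹ denote the unit circle in ℝ², equipped with its surface (arclength) measure σ, and write ω = (ω₀, ω₁) for points of S¹. Then for every x ∈ ℝ² with ‖x‖₂ < 1: ∫_{S¹} ∫_{−1}^{1} (⟨ω, x⟩ − b)_+ · (8ω₀⁴ − 8ω₀² + 1) db dσ(ω) = 0. That is, the even density (ω, b) ↦ 8ω₀⁴ − 8ω₀² + 1 on S¹ × (−1, 1) yields an infinite-width ReLU network representation of the zero function on the open unit ball of ℝ². -/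
/-!
For `‖ω‖ = 1` we have `|⟪ω, x⟫| < 1`, so the inner integral is `(⟪ω, x⟫ + 1)² / 2 · T₄(ω₀)`,
where `T₄(t) = 8t⁴ - 8t² + 1` is the Chebyshev polynomial with `T₄(cos θ) = cos 4θ`. Arclength is
rotation invariant. A rotation by `π / 4` changes the sign of `T₄(ω₀)`, so its mean is zero.
Averaging over `ω ↦ -ω` removes the odd part of `(⟪ω, x⟫ + 1)²`, and averaging the remaining
`1 + ⟪ω, x⟫²` over a quarter turn makes it the constant `1 + ‖x‖² / 2`; both symmetries fix
`T₄(ω₀)`.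
-/

open MeasureTheory
open scoped RealInnerProductSpace

/-- The arclength (1-dimensional Hausdorff) measure on the unit circle `S¹ ⊆ ℝ²`. -/
noncomputable def circleMeasure :
    Measure (Metric.sphere (0 : EuclideanSpace ℝ (Fin 2)) 1) :=
  μH[1]

open Metric Real

section Sphere

variable {R E F : Type*} [Semiring R] [SeminormedAddCommGroup E] [SeminormedAddCommGroup F]
  [Module R E] [Module R F]

def LinearIsometryEquiv.restrictSphere (e : E ≃ₗᵢ[R] F) (r : ℝ) :
    sphere (0 : E) r ≃ᵢ sphere (0 : F) r where
  toEquiv := e.toEquiv.subtypeEquiv fun x => by simp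
  isometry_toFun := fun x y => e.isometry.edist_eq x y

@[simp]
lemma LinearIsometryEquiv.coe_restrictSphere_apply (e : E ≃ₗᵢ[R] F) (r : ℝ)
    (x : sphere (0 : E) r) :
    (e.restrictSphere r x : F) = e x := rfl

end Sphere

lemma MeasureTheory.MeasurePreserving.integral_add_comp {α : Type*} [MeasurableSpace α]
    {μ : Measure α} {ρ : α → α} (hρ : MeasurePreserving ρ μ μ) (hρe : MeasurableEmbedding ρ)
    {f : α → ℝ} (hf : Integrable f μ) :
    ∫ x, (f x + f (ρ x)) ∂μ = 2 * ∫ x, f x ∂μ := by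
  have hfρ : Integrable (fun x => f (ρ x)) μ := (hρ.integrable_comp_emb hρe).mpr hf
  rw [integral_add hf hfρ, hρ.integral_comp hρe f]
  ring

local notation "ℝ²" => EuclideanSpace ℝ (Fin 2)

noncomputable def planeRotation (θ : ℝ) : ℝ² ≃ₗᵢ[ℝ] ℝ² :=
  Complex.orthonormalBasisOneI.repr.symm.trans
    ((rotation (Circle.exp θ)).trans Complex.orthonormalBasisOneI.repr)

@[simp]
lemma planeRotation_apply_zero (θ : ℝ) (v : ℝ²) :
    planeRotation θ v 0 = cos θ * v 0 - sin θ * v 1 := by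
  simp [planeRotation, Complex.orthonormalBasisOneI_repr_apply,
    Complex.orthonormalBasisOneI_repr_symm_apply, Circle.coe_exp, Complex.exp_mul_I,
    Complex.cos_ofReal_re, Complex.sin_ofReal_re]

@[simp]
lemma planeRotation_apply_one (θ : ℝ) (v : ℝ²) :
    planeRotation θ v 1 = sin θ * v 0 + cos θ * v 1 := by
  simp [planeRotation, Complex.orthonormalBasisOneI_repr_apply,
    Complex.orthonormalBasisOneI_repr_symm_apply, Circle.coe_exp, Complex.exp_mul_I,
    Complex.cos_ofReal_re, Complex.sin_ofReal_re]
  ring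

local notation "S¹" => sphere (0 : ℝ²) 1

lemma sq_add_sq_of_mem_sphere (ω : S¹) : (ω : ℝ²) 0 ^ 2 + (ω : ℝ²) 1 ^ 2 = 1 := by
  have h := EuclideanSpace.real_norm_sq_eq (ω : ℝ²)
  rw [norm_eq_of_mem_sphere, Fin.sum_univ_two] at h
  linarith

lemma inner_eq_fin_two (v x : ℝ²) : ⟪v, x⟫ = v 0 * x 0 + v 1 * x 1 := by
  simp [PiLp.inner_apply, Fin.sum_univ_two]
  ring

instance isFiniteMeasure_circleMeasure : IsFiniteMeasure circleMeasure := by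
  let p : ℝ → S¹ := fun θ => ⟨Complex.orthonormalBasisOneI.repr (circleMap 0 1 θ), by simp⟩
  have hp : LipschitzWith 1 p := by
    simpa using (Complex.orthonormalBasisOneI.repr.lipschitz.comp
      (lipschitzWith_circleMap 0 1)).subtype_mk fun θ => by simp
  have hsurj : Set.univ ⊆ p '' Set.Icc (-π) π := by
    rintro ω -
    set z := Complex.orthonormalBasisOneI.repr.symm ω
    have hz : ‖z‖ = 1 := by
      simp only [z, LinearIsometryEquiv.norm_map, norm_eq_of_mem_sphere]
    have harg : circleMap 0 1 z.arg = z := by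
      rw [circleMap_zero, ← hz, Complex.norm_mul_exp_arg_mul_I]
    refine ⟨z.arg, ⟨(Complex.neg_pi_lt_arg z).le, Complex.arg_le_pi z⟩, Subtype.ext ?_⟩
    simp only [p, harg, z, LinearIsometryEquiv.apply_symm_apply]
  constructor
  calc circleMeasure Set.univ ≤ μH[1] (p '' Set.Icc (-π) π) := measure_mono hsurj
    _ ≤ 1 ^ (1 : ℝ) * μH[1] (Set.Icc (-π) π) := hp.hausdorffMeasure_image_le zero_le_one _
    _ < ⊤ := by simp [hausdorffMeasure_real]

lemma integrable_circleMeasure_of_continuous {f : S¹ → ℝ} (hf : Continuous f) :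
    Integrable f circleMeasure :=
  hf.integrable_of_hasCompactSupport (HasCompactSupport.of_compactSpace f)

lemma integral_add_comp_planeRotation (θ : ℝ) {f : S¹ → ℝ} (hf : Continuous f) :
    ∫ ω, (f ω + f ((planeRotation θ).restrictSphere 1 ω)) ∂circleMeasure =
      2 * ∫ ω, f ω ∂circleMeasure :=
  ((planeRotation θ).restrictSphere 1).measurePreserving_hausdorffMeasure 1 |>.integral_add_comp
    ((planeRotation θ).restrictSphere 1).toHomeomorph.measurableEmbedding
    (integrable_circleMeasure_of_continuous hf)

def chebyshevFour (t : ℝ) : ℝ := 8 * t ^ 4 - 8 * t ^ 2 + 1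

lemma chebyshevFour_neg (t : ℝ) : chebyshevFour (-t) = chebyshevFour t := by
  unfold chebyshevFour; ring

lemma chebyshevFour_eq_of_sq_add_sq {a b : ℝ} (h : a ^ 2 + b ^ 2 = 1) :
    chebyshevFour b = chebyshevFour a := by
  unfold chebyshevFour
  linear_combination 8 * (b ^ 2 - a ^ 2) * h

lemma chebyshevFour_rotate_pi_div_four {a b : ℝ} (h : a ^ 2 + b ^ 2 = 1) :
    chebyshevFour (cos (π / 4) * a - sin (π / 4) * b) = -chebyshevFour a := by
  have hc : (√2 / 2) ^ 2 = 1 / 2 := by rw [div_pow, Real.sq_sqrt zero_le_two]; norm_num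
  set X := (a - b) ^ 2
  unfold chebyshevFour
  rw [cos_pi_div_four, sin_pi_div_four]
  linear_combination (4 * X ^ 2 * (2 * (√2 / 2) ^ 2 + 1) - 8 * X) * hc +
    (2 * (a ^ 2 + b ^ 2 - 1) - 8 * a * b + 8 * a ^ 2) * h

@[fun_prop]
lemma continuous_chebyshevFour : Continuous chebyshevFour := by
  unfold chebyshevFour; fun_prop

lemma integral_chebyshevFour : ∫ ω, chebyshevFour ((ω : ℝ²) 0) ∂circleMeasure = 0 := by
  have h := integral_add_comp_planeRotation (π / 4) (f := fun ω : S¹ => chebyshevFour ((ω : ℝ²) 0))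
    (by fun_prop)
  simp only [LinearIsometryEquiv.coe_restrictSphere_apply, planeRotation_apply_zero,
    chebyshevFour_rotate_pi_div_four (sq_add_sq_of_mem_sphere _), add_neg_cancel,
    integral_zero] at h
  linarith

lemma integral_sq_add_one_mul_chebyshevFour (x : ℝ²) :
    ∫ ω : S¹, (⟪(ω : ℝ²), x⟫ + 1) ^ 2 / 2 * chebyshevFour ((ω : ℝ²) 0) ∂circleMeasure = 0 := by
  have hhalf : 2 * ∫ ω : S¹, (⟪(ω : ℝ²), x⟫ + 1) ^ 2 / 2 * chebyshevFour ((ω : ℝ²) 0)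
      ∂circleMeasure = ∫ ω : S¹, (1 + ⟪(ω : ℝ²), x⟫ ^ 2) * chebyshevFour ((ω : ℝ²) 0)
      ∂circleMeasure := by
    rw [← integral_add_comp_planeRotation π (by fun_prop)]
    congr 1 with ω
    simp only [LinearIsometryEquiv.coe_restrictSphere_apply, inner_eq_fin_two,
      planeRotation_apply_zero, planeRotation_apply_one, cos_pi, sin_pi]
    unfold chebyshevFour
    ring
  have hquarter : 2 * ∫ ω : S¹, (1 + ⟪(ω : ℝ²), x⟫ ^ 2) * chebyshevFour ((ω : ℝ²) 0)
      ∂circleMeasure = (2 + (x 0 ^ 2 + x 1 ^ 2)) * ∫ ω : S¹, chebyshevFour ((ω : ℝ²) 0)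
      ∂circleMeasure := by
    rw [← integral_add_comp_planeRotation (π / 2) (by fun_prop), ← integral_const_mul]
    congr 1 with ω
    have h := sq_add_sq_of_mem_sphere ω
    simp only [LinearIsometryEquiv.coe_restrictSphere_apply, inner_eq_fin_two,
      planeRotation_apply_zero, planeRotation_apply_one, cos_pi_div_two, sin_pi_div_two,
      zero_mul, one_mul, zero_sub, chebyshevFour_neg, chebyshevFour_eq_of_sq_add_sq h]
    linear_combination (x 0 ^ 2 + x 1 ^ 2) * chebyshevFour ((ω : ℝ²) 0) * h
  rw [integral_chebyshevFour, mul_zero] at hquarter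
  linarith

lemma intervalIntegral.integral_max_sub_zero {a c t : ℝ} (hat : a ≤ t) (htc : t ≤ c) :
    ∫ b in a..c, max (t - b) 0 = (t - a) ^ 2 / 2 := by
  have hcont : Continuous fun b : ℝ => max (t - b) 0 := by fun_prop
  have hleft : ∫ b in a..t, max (t - b) 0 = ∫ b in a..t, (t - b) :=
    intervalIntegral.integral_congr fun b hb => by
      rw [Set.uIcc_of_le hat] at hb
      exact max_eq_left (by linarith [hb.2])
  have hright : ∫ b in t..c, max (t - b) 0 = ∫ _ in t..c, (0 : ℝ) :=
    intervalIntegral.integral_congr fun b hb => by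
      rw [Set.uIcc_of_le htc] at hb
      exact max_eq_right (by linarith [hb.1])
  rw [← intervalIntegral.integral_add_adjacent_intervals (b := t) (hcont.intervalIntegrable _ _)
    (hcont.intervalIntegrable _ _), hleft, hright, intervalIntegral.integral_zero,
    intervalIntegral.integral_comp_sub_left fun b => b, integral_id]
  ring

theorem stmt10 (x : EuclideanSpace ℝ (Fin 2)) (hx : ‖x‖ < 1) :
    (∫ ω, (∫ b in (-1 : ℝ)..1,
        max (⟪(ω : EuclideanSpace ℝ (Fin 2)), x⟫ - b) 0 *
          (8 * ((ω : EuclideanSpace ℝ (Fin 2)) 0) ^ 4 -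
            8 * ((ω : EuclideanSpace ℝ (Fin 2)) 0) ^ 2 + 1))
      ∂circleMeasure) = 0 := by
  have hinner (ω : S¹) :
      ∫ b in (-1 : ℝ)..1, max (⟪(ω : ℝ²), x⟫ - b) 0 * chebyshevFour ((ω : ℝ²) 0) =
        (⟪(ω : ℝ²), x⟫ + 1) ^ 2 / 2 * chebyshevFour ((ω : ℝ²) 0) := by
    have hω : |⟪(ω : ℝ²), x⟫| ≤ 1 := (abs_real_inner_le_norm _ _).trans <| by
      rw [norm_eq_of_mem_sphere, one_mul]; exact hx.le
    rw [intervalIntegral.integral_mul_const,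
      intervalIntegral.integral_max_sub_zero (abs_le.1 hω).1 (abs_le.1 hω).2, sub_neg_eq_add]
  exact (integral_congr_ae (ae_of_all _ hinner)).trans
    (integral_sq_add_one_mul_chebyshevFour x)
end

section
/- Let d ≥ 1, R > 0, n ≥ 1 and let μ be a Borel probability measure on S^{d-1} × ℝ. Let (ω_1, b_1), …, (ω_n, b_n) be i.i.d. random variables with law μ, and let σ_1, …, σ_n be i.i.d. Rademacher random variables (uniform on {−1, +1}) independent of the (ω_i, b_i). Then E[ sup_{x ∈ ℝ^d, ‖x‖₂ ≤ R} (1/n) Σ_{i=1}^n σ_i (⟨ω_i, x⟩ − b_i)_+ ] ≤ R / √n. -/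
open MeasureTheory
open scoped RealInnerProductSpace ENNReal ProbabilityTheory

universe u v

/-- A family indexed by `Fin n ⊕ Fin n` that combines two families of random variables with
(possibly) different codomains. -/
def pairFam {n : ℕ} {Ω : Type v} {A B : Type u} (X : Fin n → Ω → A) (s : Fin n → Ω → B) :
    ∀ i : Fin n ⊕ Fin n, Ω → Sum.elim (fun _ : Fin n => A) (fun _ : Fin n => B) i
  | .inl a => X a
  | .inr a => s a

/-- The canonical measurable-space structure on the combined codomains. -/
def pairMS {n : ℕ} {A B : Type u} [MeasurableSpace A] [MeasurableSpace B] :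
    ∀ i : Fin n ⊕ Fin n,
      MeasurableSpace (Sum.elim (fun _ : Fin n => A) (fun _ : Fin n => B) i)
  | .inl _ => (inferInstance : MeasurableSpace A)
  | .inr _ => (inferInstance : MeasurableSpace B)

/-!
By independence the joint law of the data `(ωᵢ, bᵢ)` and the signs is a product, so by Fubini it
suffices to bound, for fixed data, the average over the `2ⁿ` sign patterns. Each map
`t ↦ (t - bᵢ)₊` is 1-Lipschitz, and for 1-Lipschitz `φ`
`sup (A + φ ∘ t) + sup (A - φ ∘ t) ≤ sup (A + t) + sup (A - t)`; pairing the sign patterns that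
differ only in one coordinate, this strips the ReLUs one coordinate at a time (Ledoux–Talagrand
contraction). What remains is `sup_{‖x‖ ≤ R} ⟪∑ σᵢ ωᵢ, x⟫ = R ‖∑ σᵢ ωᵢ‖`, whose average is at most
`R (∑ ‖ωᵢ‖²)^{1/2} = R √n` by Cauchy–Schwarz and the orthogonality of the signs.
-/

open Set Metric

noncomputable def boolSign (b : Bool) : ℝ := if b then 1 else -1

@[simp] lemma boolSign_true : boolSign true = 1 := rfl

@[simp] lemma boolSign_false : boolSign false = -1 := rfl

lemma boolSign_mul_self (b : Bool) : boolSign b * boolSign b = 1 := by cases b <;> norm_num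

lemma lipschitzWith_relu_sub (b : ℝ) : LipschitzWith 1 fun t : ℝ => max (t - b) 0 := by
  simpa only [sub_eq_add_neg] using (isometry_add_right (-b)).lipschitz.max_const 0

lemma iSup_add_iSup_le_of_lipschitzWith {K : Type*} [Nonempty K] {A t : K → ℝ} {φ : ℝ → ℝ}
    (hφ : LipschitzWith 1 φ) (h₁ : BddAbove (range fun x => t x + A x))
    (h₂ : BddAbove (range fun x => -t x + A x)) :
    (⨆ x, φ (t x) + A x) + (⨆ x, -φ (t x) + A x) ≤
      (⨆ x, t x + A x) + ⨆ x, -t x + A x := by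
  set M := (⨆ x, t x + A x) + ⨆ x, -t x + A x
  have pair : ∀ x y, (φ (t x) + A x) + (-φ (t y) + A y) ≤ M := by
    intro x y
    have hφxy : φ (t x) - φ (t y) ≤ |t x - t y| := by
      have hdist := hφ.dist_le_mul (t x) (t y)
      rw [NNReal.coe_one, one_mul, Real.dist_eq, Real.dist_eq] at hdist
      exact (le_abs_self _).trans hdist
    rcases le_total (t y) (t x) with hxy | hxy
    · rw [abs_of_nonneg (sub_nonneg.mpr hxy)] at hφxy
      linarith [le_ciSup h₁ x, le_ciSup h₂ y]
    · rw [abs_of_nonpos (sub_nonpos.mpr hxy)] at hφxy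
      linarith [le_ciSup h₁ y, le_ciSup h₂ x]
  have hleft : ∀ x, φ (t x) + A x ≤ M - ⨆ y, -φ (t y) + A y := fun x => by
    have hright := ciSup_le fun y => le_sub_iff_add_le'.mpr (pair x y)
    linarith
  linarith [ciSup_le hleft]

section SignPatterns

variable {ι : Type*} [Fintype ι] [DecidableEq ι]

lemma sum_boolFun_eq_sum_funSplitAt_symm {M : Type*} [AddCommMonoid M] (k : ι)
    (V : (ι → Bool) → M) :
    ∑ ε : ι → Bool, V ε = ∑ ε' : {j // j ≠ k} → Bool,
      (V ((Equiv.funSplitAt k Bool).symm (true, ε')) +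
        V ((Equiv.funSplitAt k Bool).symm (false, ε'))) := by
  rw [← (Equiv.funSplitAt k Bool).symm.sum_comp, Fintype.sum_prod_type_right]
  simp only [Fintype.sum_bool]

lemma sum_boolSign_mul_boolSign (i j : ι) :
    ∑ ε : ι → Bool, boolSign (ε i) * boolSign (ε j) =
      if i = j then 2 ^ Fintype.card ι else 0 := by
  split_ifs with hij
  · subst hij
    simp [boolSign_mul_self]
  · rw [sum_boolFun_eq_sum_funSplitAt_symm i]
    refine Finset.sum_eq_zero fun ε' _ => ?_
    simp [Equiv.funSplitAt_symm_apply, Ne.symm hij]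

lemma sum_boolSign_mul_funSplitAt_symm (k : ι) (b : Bool) (ε' : {j // j ≠ k} → Bool)
    (H : ι → ℝ) :
    ∑ i, boolSign ((Equiv.funSplitAt k Bool).symm (b, ε') i) * H i =
      boolSign b * H k + ∑ j : {j // j ≠ k}, boolSign (ε' j) * H j := by
  rw [Fintype.sum_eq_add_sum_subtype_ne _ k]
  congr 1
  · simp [Equiv.funSplitAt_symm_apply]
  · exact Fintype.sum_congr _ _ fun j => by simp [Equiv.funSplitAt_symm_apply, j.2]

lemma sum_iSup_sum_boolSign_mul_eq_sum_split {K : Type*} (k : ι) (H : ι → K → ℝ) :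
    ∑ ε : ι → Bool, ⨆ x, ∑ i, boolSign (ε i) * H i x =
      ∑ ε' : {j // j ≠ k} → Bool,
        ((⨆ x, H k x + ∑ j : {j // j ≠ k}, boolSign (ε' j) * H j x) +
          ⨆ x, -H k x + ∑ j : {j // j ≠ k}, boolSign (ε' j) * H j x) := by
  rw [sum_boolFun_eq_sum_funSplitAt_symm k]
  refine Finset.sum_congr rfl fun ε' _ => ?_
  simp only [fun b x => sum_boolSign_mul_funSplitAt_symm k b ε' (fun i => H i x), boolSign_true,
    boolSign_false, one_mul, neg_one_mul]

section Contraction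

variable {K : Type*} [TopologicalSpace K] [CompactSpace K] [Nonempty K]

lemma sum_iSup_sum_boolSign_mul_update_le (h : ι → K → ℝ) (hh : ∀ i, Continuous (h i)) (k : ι)
    {φ : ℝ → ℝ} (hφ : LipschitzWith 1 φ) :
    ∑ ε : ι → Bool, ⨆ x, ∑ i, boolSign (ε i) * Function.update h k (φ ∘ h k) i x ≤
      ∑ ε : ι → Bool, ⨆ x, ∑ i, boolSign (ε i) * h i x := by
  rw [sum_iSup_sum_boolSign_mul_eq_sum_split k, sum_iSup_sum_boolSign_mul_eq_sum_split k]
  refine Finset.sum_le_sum fun ε' _ => ?_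
  have hrest : Continuous fun x => ∑ j : {j // j ≠ k}, boolSign (ε' j) * h j x :=
    continuous_finsetSum _ fun j _ => continuous_const.mul (hh j)
  have hne : ∀ j : {j // j ≠ k}, Function.update h k (φ ∘ h k) j = h j :=
    fun j => Function.update_of_ne j.2 _ _
  simp only [Function.update_self, hne, Function.comp_apply]
  exact iSup_add_iSup_le_of_lipschitzWith hφ
    (isCompact_range ((hh k).add hrest)).bddAbove
    (isCompact_range ((hh k).neg.add hrest)).bddAbove

theorem sum_iSup_sum_boolSign_mul_comp_le (g : ι → K → ℝ) (hg : ∀ i, Continuous (g i))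
    {φ : ι → ℝ → ℝ} (hφ : ∀ i, LipschitzWith 1 (φ i)) :
    ∑ ε : ι → Bool, ⨆ x, ∑ i, boolSign (ε i) * φ i (g i x) ≤
      ∑ ε : ι → Bool, ⨆ x, ∑ i, boolSign (ε i) * g i x := by
  suffices ∀ S : Finset ι, ∑ ε : ι → Bool,
      ⨆ x, ∑ i, boolSign (ε i) * S.piecewise (fun i => φ i ∘ g i) g i x ≤
        ∑ ε : ι → Bool, ⨆ x, ∑ i, boolSign (ε i) * g i x by
    simpa using this Finset.univ
  intro S
  induction S using Finset.induction_on with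
  | empty => simp
  | insert k S hk ih =>
    have hcont : ∀ i, Continuous (S.piecewise (fun i => φ i ∘ g i) g i) := by
      intro i
      by_cases hi : i ∈ S
      · simpa [hi] using (hφ i).continuous.comp (hg i)
      · simpa [hi] using hg i
    have hgk : φ k ∘ g k = φ k ∘ S.piecewise (fun i => φ i ∘ g i) g k := by
      rw [S.piecewise_eq_of_notMem _ _ hk]
    rw [Finset.piecewise_insert, hgk]
    exact (sum_iSup_sum_boolSign_mul_update_le _ hcont k (hφ k)).trans ih

end Contraction

variable {E : Type*} [NormedAddCommGroup E] [InnerProductSpace ℝ E]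

lemma sum_norm_sum_boolSign_smul_sq (v : ι → E) :
    ∑ ε : ι → Bool, ‖∑ i, boolSign (ε i) • v i‖ ^ 2 = 2 ^ Fintype.card ι * ∑ i, ‖v i‖ ^ 2 := by
  calc ∑ ε : ι → Bool, ‖∑ i, boolSign (ε i) • v i‖ ^ 2
      = ∑ ε : ι → Bool, ∑ i, ∑ j, boolSign (ε i) * boolSign (ε j) * ⟪v i, v j⟫ := by
        refine Finset.sum_congr rfl fun ε _ => ?_
        rw [← real_inner_self_eq_norm_sq, sum_inner]
        simp only [inner_sum, real_inner_smul_left, real_inner_smul_right, mul_assoc]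
        exact Finset.sum_congr rfl fun i _ => Finset.sum_congr rfl fun j _ => mul_left_comm _ _ _
    _ = ∑ i, ∑ j, (∑ ε : ι → Bool, boolSign (ε i) * boolSign (ε j)) * ⟪v i, v j⟫ := by
        simp only [Finset.sum_mul]
        rw [Finset.sum_comm]
        exact Finset.sum_congr rfl fun i _ => Finset.sum_comm
    _ = 2 ^ Fintype.card ι * ∑ i, ‖v i‖ ^ 2 := by
        simp [sum_boolSign_mul_boolSign, Finset.mul_sum]

lemma sum_norm_sum_boolSign_smul_le (v : ι → E) :
    ∑ ε : ι → Bool, ‖∑ i, boolSign (ε i) • v i‖ ≤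
      2 ^ Fintype.card ι * √(∑ i, ‖v i‖ ^ 2) := by
  have hcs := sq_sum_le_card_mul_sum_sq (s := Finset.univ)
    (f := fun ε : ι → Bool => ‖∑ i, boolSign (ε i) • v i‖)
  rw [sum_norm_sum_boolSign_smul_sq, Finset.card_univ, Fintype.card_fun, Fintype.card_bool,
    Nat.cast_pow, Nat.cast_two, ← mul_assoc, ← sq] at hcs
  calc _ ≤ √(((2:ℝ) ^ Fintype.card ι) ^ 2 * ∑ i, ‖v i‖ ^ 2) :=
        (le_abs_self _).trans (Real.abs_le_sqrt hcs)
    _ = _ := by rw [Real.sqrt_mul (by positivity), Real.sqrt_sq (by positivity)]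

lemma iSup_inner_closedBall_le {R : ℝ} (hR : 0 ≤ R) (w : E) :
    ⨆ x : closedBall (0 : E) R, ⟪w, (x : E)⟫ ≤ R * ‖w‖ := by
  have : Nonempty (closedBall (0 : E) R) := ⟨⟨0, mem_closedBall_self hR⟩⟩
  refine ciSup_le fun x => ?_
  calc ⟪w, (x : E)⟫ ≤ ‖w‖ * ‖(x : E)‖ := real_inner_le_norm _ _
    _ ≤ ‖w‖ * R := by gcongr; exact mem_closedBall_zero_iff.mp x.2
    _ = R * ‖w‖ := mul_comm _ _

theorem sum_iSup_sum_boolSign_mul_relu_le [ProperSpace E] (v : ι → E) (b : ι → ℝ) {R : ℝ}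
    (hR : 0 ≤ R) :
    ∑ ε : ι → Bool, ⨆ x : closedBall (0 : E) R,
        ∑ i, boolSign (ε i) * max (⟪v i, (x : E)⟫ - b i) 0 ≤
      2 ^ Fintype.card ι * (R * √(∑ i, ‖v i‖ ^ 2)) := by
  have : Nonempty (closedBall (0 : E) R) := ⟨⟨0, mem_closedBall_self hR⟩⟩
  have : CompactSpace (closedBall (0 : E) R) :=
    isCompact_iff_compactSpace.mp (isCompact_closedBall _ _)
  calc _ ≤ ∑ ε : ι → Bool, ⨆ x : closedBall (0 : E) R, ∑ i, boolSign (ε i) * ⟪v i, (x : E)⟫ :=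
        sum_iSup_sum_boolSign_mul_comp_le (fun i (x : closedBall (0 : E) R) => ⟪v i, (x : E)⟫)
          (fun i => continuous_const.inner continuous_subtype_val)
          (fun i => lipschitzWith_relu_sub (b i))
    _ ≤ ∑ ε : ι → Bool, R * ‖∑ i, boolSign (ε i) • v i‖ := by
        refine Finset.sum_le_sum fun ε _ => ?_
        simp only [← real_inner_smul_left, ← sum_inner]
        exact iSup_inner_closedBall_le hR _
    _ ≤ _ := by
        rw [← Finset.mul_sum, mul_left_comm]
        gcongr
        exact sum_norm_sum_boolSign_smul_le v

theorem mean_sum_iSup_mean_boolSign_mul_relu_le [ProperSpace E] {n : ℕ} (v : Fin n → E)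
    (hv : ∀ i, ‖v i‖ ≤ 1) (b : Fin n → ℝ) {R : ℝ} (hR : 0 ≤ R) :
    ((2 : ℝ) ^ n)⁻¹ * ∑ ε : Fin n → Bool, ⨆ x : closedBall (0 : E) R,
        (1 / n : ℝ) * ∑ i, boolSign (ε i) * max (⟪v i, (x : E)⟫ - b i) 0 ≤ R / √n := by
  have hnorm : ∑ i, ‖v i‖ ^ 2 ≤ n := by
    simpa using Finset.sum_le_sum fun i (_ : i ∈ Finset.univ) =>
      pow_le_one₀ (n := 2) (norm_nonneg (v i)) (hv i)
  simp only [← Real.mul_iSup_of_nonneg (by positivity : (0 : ℝ) ≤ 1 / n), ← Finset.mul_sum]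
  calc ((2 : ℝ) ^ n)⁻¹ * ((1 / n : ℝ) * ∑ ε : Fin n → Bool, ⨆ x : closedBall (0 : E) R,
        ∑ i, boolSign (ε i) * max (⟪v i, (x : E)⟫ - b i) 0)
      ≤ ((2 : ℝ) ^ n)⁻¹ * ((1 / n : ℝ) * (2 ^ n * (R * √n))) := by
        gcongr
        refine (sum_iSup_sum_boolSign_mul_relu_le v b hR).trans ?_
        rw [Fintype.card_fin]
        gcongr
    _ = R * (√n / n) := by field_simp
    _ = R / √n := by rw [Real.sqrt_div_self', mul_one_div]

noncomputable def rademacherMeasure : Measure ℝ :=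
  (2⁻¹ : ℝ≥0∞) • Measure.dirac 1 + (2⁻¹ : ℝ≥0∞) • Measure.dirac (-1)

instance : IsProbabilityMeasure rademacherMeasure :=
  ⟨by simp [rademacherMeasure, ENNReal.inv_two_add_inv_two]⟩

lemma rademacherMeasure_apply {t : Set ℝ} (ht : MeasurableSet t) :
    rademacherMeasure t = 2⁻¹ * ∑ b, t.indicator 1 (boolSign b) := by
  simp [rademacherMeasure, Measure.dirac_apply' _ ht, mul_add]

lemma pi_rademacherMeasure :
    Measure.pi (fun _ : ι => rademacherMeasure) =
      ((2 : ℝ≥0∞) ^ Fintype.card ι)⁻¹ • ∑ ε : ι → Bool, Measure.dirac fun i => boolSign (ε i) := by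
  refine Measure.pi_eq (μ := fun _ : ι => rademacherMeasure) fun t ht => ?_
  have hdirac : ∀ ε : ι → Bool, (univ.pi t).indicator 1 (fun i => boolSign (ε i)) =
      ∏ i, (t i).indicator (1 : ℝ → ℝ≥0∞) (boolSign (ε i)) := by
    intro ε
    classical
    simp [Set.indicator_apply, Finset.prod_boole]
  calc _ = ((2 : ℝ≥0∞) ^ Fintype.card ι)⁻¹ *
        ∑ ε : ι → Bool, ∏ i, (t i).indicator 1 (boolSign (ε i)) := by
        simp [Measure.finsetSum_apply, Measure.dirac_apply' _ (MeasurableSet.univ_pi ht), hdirac]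
    _ = ∏ i, 2⁻¹ * ∑ b, (t i).indicator 1 (boolSign b) := by
        rw [Finset.prod_mul_distrib, Fintype.prod_sum]
        simp [ENNReal.inv_pow]
    _ = _ := by simp [rademacherMeasure_apply (ht _)]

lemma integral_pi_rademacherMeasure (f : (ι → ℝ) → ℝ) :
    ∫ σ, f σ ∂Measure.pi (fun _ : ι => rademacherMeasure) =
      ((2 : ℝ) ^ Fintype.card ι)⁻¹ * ∑ ε : ι → Bool, f fun i => boolSign (ε i) := by
  rw [pi_rademacherMeasure, integral_smul_measure,
    integral_finsetSum_measure fun ε _ => integrable_dirac enorm_lt_top]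
  simp [integral_dirac, ENNReal.toReal_inv]

end SignPatterns

lemma IsCompact.continuous_iSup_subtype {γ β : Type*} [TopologicalSpace γ] [TopologicalSpace β]
    {f : γ → β → ℝ} {K : Set β} (hK : IsCompact K) (hf : Continuous ↿f) :
    Continuous fun p => ⨆ x : K, f p x := by
  have h := hK.continuous_sSup hf
  simp only [image_eq_range] at h
  exact h

lemma map_prod_pi_eq_prod_pi_map {Ω : Type*} [MeasurableSpace Ω] {P : Measure Ω}
    [IsProbabilityMeasure P] {n : ℕ} {A B : Type u} [MeasurableSpace A] [MeasurableSpace B]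
    {X : Fin n → Ω → A} {s : Fin n → Ω → B} (hX : ∀ i, Measurable (X i))
    (hs : ∀ i, Measurable (s i))
    (hindep : ProbabilityTheory.iIndepFun (m := pairMS) (pairFam X s) P) :
    P.map (fun ω => ((fun i => X i ω), fun i => s i ω)) =
      (Measure.pi fun i => P.map (X i)).prod (Measure.pi fun i => P.map (s i)) := by
  let _ : ∀ i, MeasurableSpace (Sum.elim (fun _ : Fin n => A) (fun _ : Fin n => B) i) := pairMS
  have hmeas : ∀ i, Measurable (pairFam X s i) := by
    rintro (i | i)
    exacts [hX i, hs i]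
  have _ : ∀ i, IsProbabilityMeasure (P.map (pairFam X s i)) :=
    fun i => Measure.isProbabilityMeasure_map (hmeas i).aemeasurable
  have hjoint := (ProbabilityTheory.iIndepFun_iff_map_fun_eq_pi_map
    (fun i => (hmeas i).aemeasurable)).mp hindep
  have hsplit := (measurePreserving_sumPiEquivProdPi fun i => P.map (pairFam X s i)).map_eq
  rw [← hjoint, Measure.map_map (MeasurableEquiv.measurable _) (measurable_pi_lambda _ hmeas)]
    at hsplit
  exact hsplit

lemma integral_prod_le_of_forall_integral_le {α β : Type*} [MeasurableSpace α]
    [MeasurableSpace β] {μ : Measure α} {ν : Measure β} [IsProbabilityMeasure μ] [SFinite ν]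
    {F : α × β → ℝ} {c : ℝ} (hc : 0 ≤ c) (h : ∀ a, ∫ b, F (a, b) ∂ν ≤ c) :
    ∫ p, F p ∂μ.prod ν ≤ c := by
  by_cases hF : Integrable F (μ.prod ν)
  · rw [integral_prod F hF]
    exact (integral_mono hF.integral_prod_left (integrable_const c) h).trans (by simp)
  · rw [integral_undef hF]
    exact hc

theorem stmt14_general (d n : ℕ) (R : ℝ) (hR : 0 < R)
    (Ω : Type) [MeasureSpace Ω] [IsProbabilityMeasure (ℙ : Measure Ω)]
    (X : Fin n → Ω → Metric.sphere (0 : EuclideanSpace ℝ (Fin d)) 1 × ℝ)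
    (s : Fin n → Ω → ℝ)
    (hXmeas : ∀ i, Measurable (X i)) (hsmeas : ∀ i, Measurable (s i))
    (hslaw : ∀ i, Measure.map (s i) ℙ =
      (2⁻¹ : ℝ≥0∞) • Measure.dirac (1 : ℝ) + (2⁻¹ : ℝ≥0∞) • Measure.dirac (-1 : ℝ))
    (hindep : ProbabilityTheory.iIndepFun (m := pairMS) (pairFam X s) ℙ) :
    (∫ (ω : Ω), (⨆ x : Metric.closedBall (0 : EuclideanSpace ℝ (Fin d)) R,
        (1 / n : ℝ) * ∑ i, s i ω *
          max (⟪(((X i ω).1 : EuclideanSpace ℝ (Fin d))), (x : EuclideanSpace ℝ (Fin d))⟫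
            - (X i ω).2) 0) ∂(ℙ : Measure Ω)) ≤ R / Real.sqrt n := by
  set E := EuclideanSpace ℝ (Fin d)
  let G : (Fin n → sphere (0 : E) 1 × ℝ) × (Fin n → ℝ) → E → ℝ := fun p x =>
    (1 / n : ℝ) * ∑ i, p.2 i * max (⟪((p.1 i).1 : E), x⟫ - (p.1 i).2) 0
  have hF : Measurable fun p => ⨆ x : closedBall (0 : E) R, G p x :=
    ((isCompact_closedBall _ _).continuous_iSup_subtype (by fun_prop)).measurable
  have hXs : Measurable fun ω => ((fun i => X i ω), fun i => s i ω) :=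
    (measurable_pi_lambda _ hXmeas).prodMk (measurable_pi_lambda _ hsmeas)
  have _ : ∀ i, IsProbabilityMeasure ((ℙ : Measure Ω).map (X i)) :=
    fun i => Measure.isProbabilityMeasure_map (hXmeas i).aemeasurable
  have hslaw' : ∀ i, Measure.map (s i) ℙ = rademacherMeasure := hslaw
  calc _ = ∫ p, ⨆ x : closedBall (0 : E) R, G p x
          ∂(ℙ : Measure Ω).map fun ω => ((fun i => X i ω), fun i => s i ω) :=
        (integral_map hXs.aemeasurable hF.aestronglyMeasurable).symm
    _ = ∫ p, ⨆ x : closedBall (0 : E) R, G p x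
          ∂(Measure.pi fun i => (ℙ : Measure Ω).map (X i)).prod
            (Measure.pi fun _ => rademacherMeasure) := by
        rw [map_prod_pi_eq_prod_pi_map hXmeas hsmeas hindep]
        simp only [hslaw']
    _ ≤ R / √n := by
        refine integral_prod_le_of_forall_integral_le (by positivity) fun a => ?_
        rw [integral_pi_rademacherMeasure, Fintype.card_fin]
        exact mean_sum_iSup_mean_boolSign_mul_relu_le (fun i => ((a i).1 : E))
          (fun i => (norm_eq_of_mem_sphere (a i).1).le) (fun i => (a i).2) hR.le

/-- Rademacher complexity bound: the `(X i)` are i.i.d. with law `μ`, the `(s i)` are i.i.d.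
Rademacher signs, and the whole family is independent. -/
theorem stmt14 (d n : ℕ) (hd : 1 ≤ d) (hn : 1 ≤ n) (R : ℝ) (hR : 0 < R)
    (μ : Measure (Metric.sphere (0 : EuclideanSpace ℝ (Fin d)) 1 × ℝ))
    [IsProbabilityMeasure μ]
    (Ω : Type) [MeasureSpace Ω] [IsProbabilityMeasure (ℙ : Measure Ω)]
    (X : Fin n → Ω → Metric.sphere (0 : EuclideanSpace ℝ (Fin d)) 1 × ℝ)
    (s : Fin n → Ω → ℝ)
    (hXmeas : ∀ i, Measurable (X i)) (hsmeas : ∀ i, Measurable (s i))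
    (hXlaw : ∀ i, Measure.map (X i) ℙ = μ)
    (hslaw : ∀ i, Measure.map (s i) ℙ =
      (2⁻¹ : ℝ≥0∞) • Measure.dirac (1 : ℝ) + (2⁻¹ : ℝ≥0∞) • Measure.dirac (-1 : ℝ))
    (hindep : ProbabilityTheory.iIndepFun (m := pairMS) (pairFam X s) ℙ) :
    (∫ (ω : Ω), (⨆ x : Metric.closedBall (0 : EuclideanSpace ℝ (Fin d)) R,
        (1 / n : ℝ) * ∑ i, s i ω *
          max (⟪(((X i ω).1 : EuclideanSpace ℝ (Fin d))), (x : EuclideanSpace ℝ (Fin d))⟫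
            - (X i ω).2) 0) ∂(ℙ : Measure Ω)) ≤ R / Real.sqrt n :=
  stmt14_general d n R hR Ω X s hXmeas hsmeas hslaw hindep
end
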